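/- Let (Ω, Σ) and (Ω', Σ') be measurable spaces, H a separable complex Hilbert space, and let M₁ ∈ O_Σ(H) and M₂ ∈ O_{Σ'}(H) be jointly measurable observables. If M₁ is sharp (projection valued) or M₂ is sharp, then M₁(X) and M₂(Y) commute for all X ∈ Σ, Y ∈ Σ', and the unique joint observable M ∈ O_{Σ⊗Σ'}(H) is determined by M(X × Y) = M₁(X)M₂(Y) for all X ∈ Σ, Y ∈ Σ'. -/

import Mathlib

/-! If `M₁ X = M (X × Ω')` is a projection `P`, then `M (X × Y) ≤ P` and `M (Xᶜ × Y) ≤ 1 - P`,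
and a positive operator dominated by a projection is absorbed by it on both sides. Since
`M₂ Y = M (X × Y) + M (Xᶜ × Y)`, multiplying by `P` on either side leaves `M (X × Y)`, so
`M (X × Y) = P M₂ Y = M₂ Y P`; the case of a sharp `M₂` is the same after swapping the factors.
A joint observable is thus fixed on the π-system of measurable rectangles, hence everywhere. -/

open scoped ComplexOrder ComplexInnerProductSpace Topology

noncomputable section

/-- A normalized positive operator valued measure (POVM, observable) on the measurable
space `Ω` with values in `L(H)`: positive operator values, `M univ = 1`, and σ-additivity
in the weak operator topology. -/
def IsPOVM {Ω : Type*} [MeasurableSpace Ω] {H : Type*}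
    [NormedAddCommGroup H] [InnerProductSpace ℂ H] [CompleteSpace H]
    (M : Set Ω → H →L[ℂ] H) : Prop :=
  (∀ X : Set Ω, MeasurableSet X → (M X).IsPositive) ∧
  M Set.univ = 1 ∧
  ∀ f : ℕ → Set Ω, (∀ n, MeasurableSet (f n)) → Pairwise (Function.onFun Disjoint f) →
    ∀ x y : H, HasSum (fun n => ⟪x, M (f n) y⟫) ⟪x, M (⋃ n, f n) y⟫

/-- A POVM is extremal in the convex set of all POVMs on the same σ-algebra. -/
def IsExtremalPOVM {Ω : Type*} [MeasurableSpace Ω] {H : Type*}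
    [NormedAddCommGroup H] [InnerProductSpace ℂ H] [CompleteSpace H]
    (M : Set Ω → H →L[ℂ] H) : Prop :=
  IsPOVM M ∧ ∀ M₁ M₂ : Set Ω → H →L[ℂ] H, IsPOVM M₁ → IsPOVM M₂ →
    ∀ t : ℝ, 0 < t → t < 1 →
    (∀ X : Set Ω, MeasurableSet X → M X = (t : ℂ) • M₁ X + ((1 - t : ℝ) : ℂ) • M₂ X) →
    ∀ X : Set Ω, MeasurableSet X → M₁ X = M₂ X


open Set MeasureTheory

lemma IsStarProjection.mul_add_and_add_mul_of_le_of_le_one_sub {A : Type*} [CStarAlgebra A]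
    [PartialOrder A] [StarOrderedRing A] {p a b : A} (hp : IsStarProjection p)
    (ha : 0 ≤ a) (hap : a ≤ p) (hb : 0 ≤ b) (hbp : b ≤ 1 - p) :
    p * (a + b) = a ∧ (a + b) * p = a := by
  obtain ⟨hap', hpa⟩ := hp.mul_right_and_mul_left_of_nonneg_of_le ha hap
  obtain ⟨hbq, hqb⟩ := hp.one_sub.mul_right_and_mul_left_of_nonneg_of_le hb hbp
  have hpb : p * b = 0 := by rw [← hqb, ← mul_assoc, hp.mul_one_sub_self, zero_mul]
  have hbp' : b * p = 0 := by rw [← hbq, mul_assoc, hp.one_sub_mul_self, mul_zero]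
  rw [mul_add, add_mul, hpa, hpb, hap', hbp', add_zero]
  exact ⟨rfl, rfl⟩

namespace IsPOVM

variable {Ω Ω' : Type*} [MeasurableSpace Ω] [MeasurableSpace Ω']
  {H : Type*} [NormedAddCommGroup H] [InnerProductSpace ℂ H] [CompleteSpace H]

section

variable {M N : Set Ω → H →L[ℂ] H}

lemma nonneg (hM : IsPOVM M) {s : Set Ω} (hs : MeasurableSet s) : 0 ≤ M s :=
  (ContinuousLinearMap.nonneg_iff_isPositive _).2 (hM.1 s hs)

lemma empty (hM : IsPOVM M) : M ∅ = 0 := by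
  ext y
  refine ext_inner_left ℂ fun x => ?_
  have h := hM.2.2 (fun _ => ∅) (fun _ => .empty) (fun _ _ _ => disjoint_bot_left) x y
  rw [iUnion_empty] at h
  simpa using tendsto_const_nhds_iff.mp h.summable.tendsto_atTop_zero

open Classical in
def complexMeasure (hM : IsPOVM M) (x y : H) : ComplexMeasure Ω where
  measureOf' s := if MeasurableSet s then ⟪x, M s y⟫ else 0
  empty' := by simp [hM.empty]
  not_measurable' _ hs := if_neg hs
  m_iUnion' f hf hd := by simpa [hf, MeasurableSet.iUnion hf] using hM.2.2 f hf hd x y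

lemma complexMeasure_apply (hM : IsPOVM M) (x y : H) {s : Set Ω} (hs : MeasurableSet s) :
    hM.complexMeasure x y s = ⟪x, M s y⟫ := by
  simp [complexMeasure, hs]

lemma union (hM : IsPOVM M) {s t : Set Ω} (hs : MeasurableSet s) (ht : MeasurableSet t)
    (hst : Disjoint s t) : M (s ∪ t) = M s + M t := by
  ext y
  refine ext_inner_left ℂ fun x => ?_
  have h := (hM.complexMeasure x y).of_union hst hs ht
  rwa [hM.complexMeasure_apply x y (hs.union ht), hM.complexMeasure_apply x y hs,
    hM.complexMeasure_apply x y ht, ← inner_add_right] at h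

lemma compl (hM : IsPOVM M) {s : Set Ω} (hs : MeasurableSet s) : M sᶜ = 1 - M s := by
  rw [← hM.2.1, ← union_compl_self s, hM.union hs hs.compl disjoint_compl_right,
    add_sub_cancel_left]

lemma mono (hM : IsPOVM M) {s t : Set Ω} (hs : MeasurableSet s) (ht : MeasurableSet t)
    (hst : s ⊆ t) : M s ≤ M t := by
  rw [ContinuousLinearMap.le_def, ← union_sdiff_cancel hst,
    hM.union hs (ht.diff hs) disjoint_sdiff_right, add_sub_cancel_left]
  exact hM.1 _ (ht.diff hs)

lemma map (hM : IsPOVM M) {f : Ω → Ω'} (hf : Measurable f) :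
    IsPOVM fun s => M (f ⁻¹' s) := by
  refine ⟨fun s hs => hM.1 _ (hf hs), hM.2.1, fun g hg hd x y => ?_⟩
  simp only [preimage_iUnion]
  exact hM.2.2 _ (fun n => hf (hg n)) (fun i j hij => Disjoint.preimage f (hd hij)) x y

lemma ext_of_generateFrom (hM : IsPOVM M) (hN : IsPOVM N) {C : Set (Set Ω)}
    (hgen : ‹MeasurableSpace Ω› = MeasurableSpace.generateFrom C) (hC : IsPiSystem C)
    (hMN : ∀ s ∈ C, M s = N s) {s : Set Ω} (hs : MeasurableSet s) : M s = N s := by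
  induction s, hs using MeasurableSpace.induction_on_inter hgen hC with
  | empty => rw [hM.empty, hN.empty]
  | basic t ht => exact hMN t ht
  | compl t ht h => rw [hM.compl ht, hN.compl ht, h]
  | iUnion f hd hf h =>
    ext y
    refine ext_inner_left ℂ fun x => (hM.2.2 f hf hd x y).unique ?_
    simpa only [h] using hN.2.2 f hf hd x y

end

variable {M : Set (Ω × Ω') → H →L[ℂ] H} {X : Set Ω} {Y : Set Ω'}

lemma prod_eq_mul_of_isIdempotentElem_fst (hM : IsPOVM M) (hX : MeasurableSet X)
    (hY : MeasurableSet Y) (hP : IsIdempotentElem (M (X ×ˢ univ))) :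
    M (X ×ˢ univ) * M (univ ×ˢ Y) = M (X ×ˢ Y) ∧
      M (univ ×ˢ Y) * M (X ×ˢ univ) = M (X ×ˢ Y) := by
  have hXΩ' : MeasurableSet (X ×ˢ (univ : Set Ω')) := hX.prod .univ
  have hproj : IsStarProjection (M (X ×ˢ univ)) := ⟨hP, (hM.1 _ hXΩ').isSelfAdjoint⟩
  have hsplit : M (univ ×ˢ Y) = M (X ×ˢ Y) + M (Xᶜ ×ˢ Y) := by
    rw [← hM.union (hX.prod hY) (hX.compl.prod hY) (disjoint_compl_right.set_prod_left _ _),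
      ← union_prod, union_compl_self]
  have hle_compl : M (Xᶜ ×ˢ Y) ≤ 1 - M (X ×ˢ univ) := by
    rw [← hM.compl hXΩ']
    exact hM.mono (hX.compl.prod hY) hXΩ'.compl fun z hz hz' => hz.1 hz'.1
  rw [hsplit]
  exact hproj.mul_add_and_add_mul_of_le_of_le_one_sub (hM.nonneg (hX.prod hY))
    (hM.mono (hX.prod hY) hXΩ' (prod_mono_right (subset_univ Y)))
    (hM.nonneg (hX.compl.prod hY)) hle_compl

lemma prod_eq_mul_of_isIdempotentElem_snd (hM : IsPOVM M) (hX : MeasurableSet X)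
    (hY : MeasurableSet Y) (hQ : IsIdempotentElem (M (univ ×ˢ Y))) :
    M (X ×ˢ univ) * M (univ ×ˢ Y) = M (X ×ˢ Y) ∧
      M (univ ×ˢ Y) * M (X ×ˢ univ) = M (X ×ˢ Y) := by
  have h := (hM.map measurable_swap).prod_eq_mul_of_isIdempotentElem_fst hY hX
    (by rwa [preimage_swap_prod])
  simp only [preimage_swap_prod] at h
  exact h.symm

lemma commute_and_prod_eq_mul (hM : IsPOVM M) (hX : MeasurableSet X) (hY : MeasurableSet Y)
    (hsharp : IsIdempotentElem (M (X ×ˢ univ)) ∨ IsIdempotentElem (M (univ ×ˢ Y))) :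
    Commute (M (X ×ˢ univ)) (M (univ ×ˢ Y)) ∧
      M (X ×ˢ Y) = M (X ×ˢ univ) * M (univ ×ˢ Y) := by
  obtain ⟨h₁, h₂⟩ := hsharp.elim (hM.prod_eq_mul_of_isIdempotentElem_fst hX hY)
    (hM.prod_eq_mul_of_isIdempotentElem_snd hX hY)
  exact ⟨h₁.trans h₂.symm, h₁.symm⟩

end IsPOVM

theorem joint_observable_of_sharp_marginal
    {Ω Ω' : Type*} [MeasurableSpace Ω] [MeasurableSpace Ω']
    {H : Type*} [NormedAddCommGroup H] [InnerProductSpace ℂ H] [CompleteSpace H]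
    (M₁ : Set Ω → H →L[ℂ] H) (M₂ : Set Ω' → H →L[ℂ] H)
    (M : Set (Ω × Ω') → H →L[ℂ] H) (hM : IsPOVM M)
    (hmarg₁ : ∀ X : Set Ω, MeasurableSet X → M (X ×ˢ (Set.univ : Set Ω')) = M₁ X)
    (hmarg₂ : ∀ Y : Set Ω', MeasurableSet Y → M ((Set.univ : Set Ω) ×ˢ Y) = M₂ Y)
    (hsharp : (∀ X : Set Ω, MeasurableSet X → IsIdempotentElem (M₁ X)) ∨
      (∀ Y : Set Ω', MeasurableSet Y → IsIdempotentElem (M₂ Y))) :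
    (∀ (X : Set Ω) (Y : Set Ω'), MeasurableSet X → MeasurableSet Y →
      Commute (M₁ X) (M₂ Y)) ∧
    (∀ (X : Set Ω) (Y : Set Ω'), MeasurableSet X → MeasurableSet Y →
      M (X ×ˢ Y) = M₁ X * M₂ Y) ∧
    (∀ M' : Set (Ω × Ω') → H →L[ℂ] H, IsPOVM M' →
      (∀ X : Set Ω, MeasurableSet X → M' (X ×ˢ (Set.univ : Set Ω')) = M₁ X) →
      (∀ Y : Set Ω', MeasurableSet Y → M' ((Set.univ : Set Ω) ×ˢ Y) = M₂ Y) →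
      ∀ Z : Set (Ω × Ω'), MeasurableSet Z → M' Z = M Z) := by
  have hrect : ∀ N : Set (Ω × Ω') → H →L[ℂ] H, IsPOVM N →
      (∀ X : Set Ω, MeasurableSet X → N (X ×ˢ (Set.univ : Set Ω')) = M₁ X) →
      (∀ Y : Set Ω', MeasurableSet Y → N ((Set.univ : Set Ω) ×ˢ Y) = M₂ Y) →
      ∀ (X : Set Ω) (Y : Set Ω'), MeasurableSet X → MeasurableSet Y →
        Commute (M₁ X) (M₂ Y) ∧ N (X ×ˢ Y) = M₁ X * M₂ Y := by
    intro N hN h₁ h₂ X Y hX hY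
    rw [← h₁ X hX, ← h₂ Y hY]
    exact hN.commute_and_prod_eq_mul hX hY
      (hsharp.imp (fun h => (h₁ X hX).symm ▸ h X hX) (fun h => (h₂ Y hY).symm ▸ h Y hY))
  refine ⟨fun X Y hX hY => (hrect M hM hmarg₁ hmarg₂ X Y hX hY).1,
    fun X Y hX hY => (hrect M hM hmarg₁ hmarg₂ X Y hX hY).2,
    fun M' hM' h₁ h₂ Z hZ =>
      hM'.ext_of_generateFrom hM generateFrom_prod.symm isPiSystem_prod ?_ hZ⟩
  rintro _ ⟨X, hX, Y, hY, rfl⟩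
  rw [(hrect M' hM' h₁ h₂ X Y hX hY).2, (hrect M hM hmarg₁ hmarg₂ X Y hX hY).2]
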